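/- Fix offspring and cooperation distributions L_o and L_c on the nonnegative integers, let m ≥ 1 be an integer, let Z^{(m)} denote a DBPC with these distributions started at m, and let q := P(∃ g ∈ ℕ: Z^{(1)}_g = 0) be the extinction probability of the DBPC started at 1. Then, because cooperation between individuals can only create additional offspring, the extinction probability started from m individuals satisfies P(∃ g ∈ ℕ: Z^{(m)}_g = 0) ≤ q^m. -/

import Mathlib

open MeasureTheory ProbabilityTheory Filter

/-- A discrete-time branching process with cooperation (DBPC) with offspring
distribution `Lo`, cooperation distribution `Lc`, started at `k₀`. -/
structure DBPC {Ω : Type*} [MeasurableSpace Ω] (P : Measure Ω)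
    (Lo Lc : PMF ℕ) (k₀ : ℕ) where
  /-- offspring variables `X g i` -/
  X : ℕ → ℕ → Ω → ℕ
  /-- cooperation variables `Y g i j` -/
  Y : ℕ → ℕ → ℕ → Ω → ℕ
  /-- the process -/
  Z : ℕ → Ω → ℕ
  measX : ∀ g i, Measurable (X g i)
  measY : ∀ g i j, Measurable (Y g i j)
  measZ : ∀ g, Measurable (Z g)
  indep : iIndepFun
    (fun p : (ℕ × ℕ) ⊕ (ℕ × ℕ × ℕ) =>
      Sum.elim (fun q : ℕ × ℕ => X q.1 q.2)
        (fun q : ℕ × ℕ × ℕ => Y q.1 q.2.1 q.2.2) p) P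
  distX : ∀ g i, P.map (X g i) = Lo.toMeasure
  distY : ∀ g i j, P.map (Y g i j) = Lc.toMeasure
  init : ∀ᵐ ω ∂P, Z 0 ω = k₀
  step : ∀ g : ℕ, ∀ᵐ ω ∂P, Z (g + 1) ω =
    (∑ i ∈ Finset.Icc 1 (Z g ω), X (g + 1) i ω) +
      ∑ i ∈ Finset.Icc 1 (Z g ω), ∑ j ∈ Finset.Ico 1 i, Y (g + 1) i j ω

/-- The mean of a probability distribution on `ℕ`. -/
noncomputable def pmfMean (L : PMF ℕ) : ℝ := ∑' j : ℕ, (j : ℝ) * (L j).toReal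

/-- The variance of a probability distribution on `ℕ`. -/
noncomputable def pmfVar (L : PMF ℕ) : ℝ :=
  ∑' j : ℕ, ((j : ℝ) - pmfMean L) ^ 2 * (L j).toReal

/-!
Split the initial individuals into two groups and follow the descendants of each group
separately, ignoring the cooperation between the groups. Cooperation only adds offspring, so the
whole population dominates the sum of the two subfamilies and can die out only if both do.
Conditioning on the first generation shows that the two subfamilies are independent DBPCs (the
second one reads the noise at shifted labels, which has the same law), hence
`P_{a+b}(Z_G = 0) ≤ P_a(Z_G = 0) P_b(Z_G = 0)` and `P_m(Z_G = 0) ≤ P_1(Z_G = 0)^m`;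
let `G → ∞`.
Probabilities are computed on the canonical space of the noise, where they depend only on
`Lo`, `Lc` and the initial size.
-/

open Finset
open scoped ENNReal

section IndependentCoordinates

variable {ι : Type*} {E : ι → Type*} [mE : ∀ i, MeasurableSpace (E i)]

lemma measurable_eval_iSup {S : Set ι} {i : ι} (hi : i ∈ S) :
    Measurable[⨆ j ∈ S, (mE j).comap (fun x : (∀ j, E j) => x j)] fun x => x i :=
  measurable_iff_comap_le.2
    (le_iSup₂ (f := fun j (_ : j ∈ S) => (mE j).comap fun x : (∀ j, E j) => x j) i hi)

lemma indepFun_infinitePi_of_disjoint {μ : ∀ i, Measure (E i)}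
    [∀ i, IsProbabilityMeasure (μ i)] {β γ : Type*} [MeasurableSpace β] [MeasurableSpace γ]
    {S T : Set ι} (hST : Disjoint S T)
    {f : (∀ i, E i) → β} {g : (∀ i, E i) → γ}
    (hf : Measurable[⨆ i ∈ S, (mE i).comap fun x => x i] f)
    (hg : Measurable[⨆ i ∈ T, (mE i).comap fun x => x i] g) :
    IndepFun f g (Measure.infinitePi μ) := by
  have hcoord := (iIndepFun_iff_iIndep _ _ _).1
    (iIndepFun_infinitePi (P := μ) (X := fun i (x : E i) => x) fun _ => measurable_id)
  rw [IndepFun_iff_Indep]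
  exact indep_of_indep_of_le_right
    (indep_of_indep_of_le_left
      (indep_iSup_of_disjoint (fun i => (measurable_pi_apply i).comap_le) hcoord hST)
      hf.comap_le) hg.comap_le

end IndependentCoordinates

lemma measure_setOf_mem_eq_tsum {Ω Ω' β : Type*} [MeasurableSpace Ω] [MeasurableSpace Ω']
    [MeasurableSpace β] [Countable β] [MeasurableSingletonClass β] {μ : Measure Ω}
    {X : Ω → β} {Y : Ω → Ω'} (hY : Measurable Y) (hXY : IndepFun X Y μ)
    (hX : Measurable X) {S : β → Set Ω'} (hS : ∀ b, MeasurableSet (S b)) :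
    μ {ω | Y ω ∈ S (X ω)} = ∑' b, μ (X ⁻¹' {b}) * μ.map Y (S b) := by
  have hunion : {ω | Y ω ∈ S (X ω)} = ⋃ b, X ⁻¹' {b} ∩ Y ⁻¹' S b := by
    ext ω; simp
  have hdisj : Pairwise (Function.onFun Disjoint fun b => X ⁻¹' {b} ∩ Y ⁻¹' S b) :=
    fun b b' hb => ((Set.disjoint_singleton.2 hb).preimage X).mono
      Set.inter_subset_left Set.inter_subset_left
  rw [hunion, measure_iUnion hdisj fun b => (hX (measurableSet_singleton b)).inter (hY (hS b))]
  congr 1 with b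
  rw [hXY.measure_inter_preimage_eq_mul _ _ (measurableSet_singleton b) (hS b),
    Measure.map_apply hY (hS b)]

lemma measurable_comp_countable {α β γ : Type*} [MeasurableSpace α] [MeasurableSpace β]
    [Countable β] [MeasurableSingletonClass β] [MeasurableSpace γ] {N : α → β}
    {F : β → α → γ} (hN : Measurable N) (hF : ∀ b, Measurable (F b)) :
    Measurable fun x => F (N x) x :=
  (measurable_from_prod_countable_right (f := fun p : β × α => F p.1 p.2) hF).comp
    (hN.prodMk measurable_id)

namespace DBPC

/-- `inl (g, i)` indexes the offspring variable of individual `i` of generation `g`, and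
`inr (g, i, j)` the cooperation variable of the pair `j < i`. -/
abbrev Idx : Type := (ℕ × ℕ) ⊕ (ℕ × ℕ × ℕ)

def Idx.gen : Idx → ℕ := Sum.elim Prod.fst Prod.fst

def Idx.label : Idx → ℕ := Sum.elim Prod.snd fun q => q.2.1

def Idx.shift (dg da : ℕ) : Idx → Idx :=
  Sum.map (fun q => (q.1 + dg, q.2 + da)) fun q => (q.1 + dg, q.2.1 + da, q.2.2 + da)

lemma Idx.shift_injective (dg da : ℕ) : Function.Injective (Idx.shift dg da) :=
  Sum.map_injective.2
    ⟨fun p q h => by simp only [Prod.mk.injEq] at h; ext <;> omega,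
     fun p q h => by simp only [Prod.mk.injEq] at h; ext <;> omega⟩

/-- Number of children, in generation `g + 1`, of the individuals `a + 1, …, a + c` of
generation `g`, when only the cooperation among these individuals is counted. -/
def offspring (ξ : Idx → ℕ) (g a c : ℕ) : ℕ :=
  ∑ i ∈ Ioc a (a + c), (ξ (.inl (g, i)) + ∑ j ∈ Ioo a i, ξ (.inr (g, i, j)))

lemma offspring_zero (ξ : Idx → ℕ) (g a : ℕ) : offspring ξ g a 0 = 0 := by
  simp [offspring]

lemma offspring_add_le (ξ : Idx → ℕ) (g a b c : ℕ) :
    offspring ξ g a b + offspring ξ g (a + b) c ≤ offspring ξ g a (b + c) := by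
  rw [offspring, offspring, offspring, ← add_assoc,
    ← sum_Ioc_consecutive _ (Nat.le_add_right a b) (Nat.le_add_right _ c)]
  gcongr with i
  exact Nat.le_add_right a b

lemma offspring_mono (ξ : Idx → ℕ) (g a : ℕ) : Monotone (offspring ξ g a) := by
  intro c c' h
  obtain ⟨d, rfl⟩ := Nat.exists_eq_add_of_le h
  exact (Nat.le_add_right _ _).trans (offspring_add_le ξ g a c d)

lemma offspring_comp_shift (ξ : Idx → ℕ) (dg da g a c : ℕ) :
    offspring (fun t => ξ (t.shift dg da)) g a c = offspring ξ (g + dg) (a + da) c := by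
  rw [offspring, offspring, add_right_comm, ← map_add_right_Ioc, sum_map]
  refine sum_congr rfl fun i _ => ?_
  rw [addRightEmbedding_apply, ← map_add_right_Ioo, sum_map]
  rfl

/-- Generation `g` of the noise `ξ` produces generation `g + 1` of the population. -/
def population (k : ℕ) (ξ : Idx → ℕ) : ℕ → ℕ
  | 0 => k
  | g + 1 => offspring ξ g 0 (population k ξ g)

/-- Sizes of the descendants of the first `a` and of the last `b` individuals of a DBPC started
at `a + b`, when cooperation across the two subfamilies is ignored. -/
def splitPopulation (a b : ℕ) (ξ : Idx → ℕ) : ℕ → ℕ × ℕ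
  | 0 => (a, b)
  | g + 1 =>
    ((offspring ξ g 0 (splitPopulation a b ξ g).1),
      offspring ξ g (splitPopulation a b ξ g).1 (splitPopulation a b ξ g).2)

lemma population_succ' (k : ℕ) (ξ : Idx → ℕ) (g : ℕ) :
    population k ξ (g + 1) =
      population (offspring ξ 0 0 k) (fun t => ξ (t.shift 1 0)) g := by
  induction g with
  | zero => rfl
  | succ g ih => rw [population, ih, population, offspring_comp_shift, add_zero]

lemma splitPopulation_succ' (a b : ℕ) (ξ : Idx → ℕ) (g : ℕ) :
    splitPopulation a b ξ (g + 1) =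
      splitPopulation (offspring ξ 0 0 a) (offspring ξ 0 a b) (fun t => ξ (t.shift 1 0)) g := by
  induction g with
  | zero => rfl
  | succ g ih =>
    rw [splitPopulation, ih, splitPopulation, offspring_comp_shift, offspring_comp_shift,
      add_zero, add_zero]

lemma splitPopulation_add_le (a b : ℕ) (ξ : Idx → ℕ) (g : ℕ) :
    (splitPopulation a b ξ g).1 + (splitPopulation a b ξ g).2 ≤ population (a + b) ξ g := by
  induction g with
  | zero => rfl
  | succ g ih =>
    rw [splitPopulation, population]
    simpa using (offspring_add_le ξ g 0 _ _).trans (offspring_mono ξ g 0 (by simpa using ih))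

lemma population_succ_eq_zero {k : ℕ} {ξ : Idx → ℕ} {g : ℕ} (h : population k ξ g = 0) :
    population k ξ (g + 1) = 0 := by
  rw [population, h, offspring_zero]

def Idx.law (Lo Lc : PMF ℕ) : Idx → PMF ℕ := Sum.elim (fun _ => Lo) fun _ => Lc

noncomputable def noiseLaw (Lo Lc : PMF ℕ) : Measure (Idx → ℕ) :=
  Measure.infinitePi fun t => (Idx.law Lo Lc t).toMeasure

variable (Lo Lc : PMF ℕ)

instance : IsProbabilityMeasure (noiseLaw Lo Lc) := by
  unfold noiseLaw; infer_instance

lemma noiseLaw_map_shift (dg da : ℕ) :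
    (noiseLaw Lo Lc).map (fun ξ t => ξ (t.shift dg da)) = noiseLaw Lo Lc := by
  rw [noiseLaw, Measure.map_infinitePi_infinitePi_of_inj (Idx.shift_injective dg da)]
  congr with t
  cases t <;> rfl

lemma measurable_offspring_iSup {T : Set Idx} {g a c : ℕ}
    (hT : ∀ t, t.gen = g → t.label ∈ Ioc a (a + c) → t ∈ T) :
    Measurable[⨆ t ∈ T, MeasurableSpace.comap (fun ξ : Idx → ℕ => ξ t) inferInstance]
      (offspring · g a c) :=
  Finset.measurable_sum _ fun i hi =>
    (measurable_eval_iSup (hT (.inl (g, i)) rfl hi)).add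
      (Finset.measurable_sum _ fun j _ => measurable_eval_iSup (hT (.inr (g, i, j)) rfl hi))

lemma measurable_offspring (g a c : ℕ) : Measurable (offspring · g a c) := by
  unfold offspring; fun_prop

lemma measurable_population (k g : ℕ) : Measurable (population k · g) := by
  induction g with
  | zero => exact measurable_const
  | succ g ih => exact measurable_comp_countable ih fun n => measurable_offspring g 0 n

lemma measurable_splitPopulation (a b g : ℕ) : Measurable (splitPopulation a b · g) := by
  induction g with
  | zero => exact measurable_const
  | succ g ih =>
    exact measurable_comp_countable
      (F := fun p ξ => (offspring ξ g 0 p.1, offspring ξ g p.1 p.2)) ih fun p =>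
        (measurable_offspring g 0 p.1).prodMk (measurable_offspring g p.1 p.2)

lemma noiseLaw_offspring_eq (g a c n : ℕ) :
    noiseLaw Lo Lc {ξ | offspring ξ g a c = n} =
      noiseLaw Lo Lc {ξ | offspring ξ 0 0 c = n} := by
  conv_rhs => rw [← noiseLaw_map_shift Lo Lc g a, Measure.map_apply (by fun_prop)
    (show MeasurableSet {ξ : Idx → ℕ | offspring ξ 0 0 c = n} from
      measurable_offspring 0 0 c (measurableSet_singleton n))]
  simp only [Set.preimage, Set.mem_ofPred_eq, offspring_comp_shift, zero_add]

lemma indepFun_shift {β : Type*} [MeasurableSpace β] {X : (Idx → ℕ) → β}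
    (hX : Measurable[⨆ t ∈ {t : Idx | t.gen = 0},
      MeasurableSpace.comap (fun ξ : Idx → ℕ => ξ t) inferInstance] X) :
    IndepFun X (fun (ξ : Idx → ℕ) (t : Idx) => ξ (t.shift 1 0)) (noiseLaw Lo Lc) := by
  have hshift : Measurable[⨆ t ∈ {t : Idx | t.gen ≠ 0},
      MeasurableSpace.comap (fun ξ : Idx → ℕ => ξ t) inferInstance]
      fun (ξ : Idx → ℕ) (t : Idx) => ξ (t.shift 1 0) := by
    refine @measurable_pi_lambda _ _ _ (⨆ t ∈ {t : Idx | t.gen ≠ 0},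
      MeasurableSpace.comap (fun ξ : Idx → ℕ => ξ t) inferInstance) _ _
      fun t => measurable_eval_iSup (E := fun _ => ℕ) ?_
    cases t <;> simp [Idx.gen, Idx.shift]
  exact indepFun_infinitePi_of_disjoint (S := {t : Idx | t.gen = 0})
    (T := {t : Idx | t.gen ≠ 0}) (Set.disjoint_left.2 fun t h h' => h' h) hX hshift

lemma noiseLaw_population_succ (k G : ℕ) :
    noiseLaw Lo Lc {ξ | population k ξ (G + 1) = 0} =
      ∑' n, noiseLaw Lo Lc {ξ | offspring ξ 0 0 k = n} *
        noiseLaw Lo Lc {ξ | population n ξ G = 0} := by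
  simp_rw [population_succ']
  refine (measure_setOf_mem_eq_tsum (S := fun n => {η | population n η G = 0}) (by fun_prop)
    (indepFun_shift Lo Lc (measurable_offspring_iSup fun t ht _ => ht))
    (measurable_offspring 0 0 k)
    fun n => measurable_population n G (measurableSet_singleton 0)).trans ?_
  rw [noiseLaw_map_shift]
  rfl

lemma indepFun_offspring_offspring (g a b : ℕ) :
    (fun ξ => offspring ξ g 0 a) ⟂ᵢ[noiseLaw Lo Lc] fun ξ => offspring ξ g a b :=
  indepFun_infinitePi_of_disjoint (S := {t : Idx | t.label ≤ a}) (T := {t : Idx | a < t.label})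
    (Set.disjoint_left.2 fun t (h : t.label ≤ a) (h' : a < t.label) => (not_lt.2 h) h')
    (measurable_offspring_iSup fun _ _ ht => (mem_Ioc.1 ht).2.trans_eq (zero_add a))
    (measurable_offspring_iSup fun _ _ ht => (mem_Ioc.1 ht).1)

lemma noiseLaw_splitPopulation_succ (a b G : ℕ) :
    noiseLaw Lo Lc {ξ | splitPopulation a b ξ (G + 1) = (0, 0)} =
      ∑' p : ℕ × ℕ, noiseLaw Lo Lc {ξ | offspring ξ 0 0 a = p.1} *
        noiseLaw Lo Lc {ξ | offspring ξ 0 a b = p.2} *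
          noiseLaw Lo Lc {ξ | splitPopulation p.1 p.2 ξ G = (0, 0)} := by
  simp_rw [splitPopulation_succ']
  refine (measure_setOf_mem_eq_tsum
    (S := fun p => {η | splitPopulation p.1 p.2 η G = (0, 0)}) (by fun_prop)
    (indepFun_shift Lo Lc ((measurable_offspring_iSup fun t ht _ => ht).prodMk
      (measurable_offspring_iSup fun t ht _ => ht)))
    ((measurable_offspring 0 0 a).prodMk (measurable_offspring 0 a b))
    fun p => measurable_splitPopulation p.1 p.2 G (measurableSet_singleton _)).trans ?_
  rw [noiseLaw_map_shift]
  congr 1 with p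
  have hpre : (fun ξ => (offspring ξ 0 0 a, offspring ξ 0 a b)) ⁻¹' {p} =
      (fun ξ => offspring ξ 0 0 a) ⁻¹' {p.1} ∩
        (fun ξ => offspring ξ 0 a b) ⁻¹' {p.2} := by
    ext; simp [Prod.ext_iff]
  rw [hpre, (indepFun_offspring_offspring Lo Lc 0 a b).measure_inter_preimage_eq_mul _ _
    (measurableSet_singleton _) (measurableSet_singleton _)]
  rfl

lemma noiseLaw_splitPopulation_eq_zero (a b G : ℕ) :
    noiseLaw Lo Lc {ξ | splitPopulation a b ξ G = (0, 0)} =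
      noiseLaw Lo Lc {ξ | population a ξ G = 0} *
        noiseLaw Lo Lc {ξ | population b ξ G = 0} := by
  induction G generalizing a b with
  | zero =>
    by_cases ha : a = 0 <;> by_cases hb : b = 0 <;> simp [ha, hb, splitPopulation, population]
  | succ G ih =>
    set μ := noiseLaw Lo Lc with hμ
    set f : ℕ → ℕ → ℕ → ℝ≥0∞ :=
      fun off k n => μ {ξ | offspring ξ 0 off k = n} * μ {ξ | population n ξ G = 0}
    calc μ {ξ | splitPopulation a b ξ (G + 1) = (0, 0)}
        = ∑' p : ℕ × ℕ, f 0 a p.1 * f a b p.2 := by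
          rw [noiseLaw_splitPopulation_succ]
          congr 1 with p
          rw [ih]
          ring
      _ = (∑' n, f 0 a n) * ∑' n, f a b n := by
          rw [ENNReal.tsum_prod (f := fun m n => f 0 a m * f a b n), ← ENNReal.tsum_mul_right]
          simp_rw [ENNReal.tsum_mul_left]
      _ = _ := by
          rw [noiseLaw_population_succ, noiseLaw_population_succ]
          simp only [f, hμ, noiseLaw_offspring_eq Lo Lc 0 a b]

lemma noiseLaw_population_add_eq_zero_le (a b G : ℕ) :
    noiseLaw Lo Lc {ξ | population (a + b) ξ G = 0} ≤
      noiseLaw Lo Lc {ξ | population a ξ G = 0} *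
        noiseLaw Lo Lc {ξ | population b ξ G = 0} := by
  rw [← noiseLaw_splitPopulation_eq_zero]
  refine measure_mono fun ξ (h : population (a + b) ξ G = 0) => ?_
  have := splitPopulation_add_le a b ξ G
  exact Prod.ext (by omega) (by omega)

lemma noiseLaw_population_eq_zero_le_pow (m G : ℕ) :
    noiseLaw Lo Lc {ξ | population m ξ G = 0} ≤
      noiseLaw Lo Lc {ξ | population 1 ξ G = 0} ^ m := by
  induction m with
  | zero => simpa using prob_le_one
  | succ m ih =>
    exact (noiseLaw_population_add_eq_zero_le Lo Lc m 1 G).trans (by rw [pow_succ]; gcongr)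

lemma noiseLaw_extinction_le_pow (m : ℕ) :
    noiseLaw Lo Lc {ξ | ∃ g, 1 ≤ g ∧ population m ξ g = 0} ≤
      noiseLaw Lo Lc {ξ | ∃ g, 1 ≤ g ∧ population 1 ξ g = 0} ^ m := by
  have hunion : {ξ | ∃ g, 1 ≤ g ∧ population m ξ g = 0} =
      ⋃ G, {ξ | population m ξ (G + 1) = 0} := by
    ext ξ
    simp only [Set.mem_ofPred_eq, Set.mem_iUnion]
    exact ⟨fun ⟨g, hg, h⟩ => ⟨g - 1, by rwa [Nat.sub_add_cancel hg]⟩,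
      fun ⟨G, h⟩ => ⟨G + 1, Nat.le_add_left 1 G, h⟩⟩
  have hmono : Monotone fun G => {ξ | population m ξ (G + 1) = 0} :=
    monotone_nat_of_le_succ fun G _ => population_succ_eq_zero
  rw [hunion, hmono.measure_iUnion]
  exact iSup_le fun G => (noiseLaw_population_eq_zero_le_pow Lo Lc m (G + 1)).trans
    (pow_le_pow_left' (measure_mono fun ξ h =>
      show ∃ g, 1 ≤ g ∧ population 1 ξ g = 0 from ⟨G + 1, Nat.le_add_left 1 G, h⟩) m)

variable {Ω : Type*} [MeasurableSpace Ω] {P : Measure Ω} {Lo Lc} {k : ℕ}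

def noise (B : DBPC P Lo Lc k) (ω : Ω) : Idx → ℕ :=
  Sum.elim (fun q => B.X (q.1 + 1) q.2 ω) fun q => B.Y (q.1 + 1) q.2.1 q.2.2 ω

lemma measurable_noise (B : DBPC P Lo Lc k) : Measurable B.noise :=
  measurable_pi_iff.2 fun t => by cases t; exacts [B.measX _ _, B.measY _ _ _]

lemma map_noise (B : DBPC P Lo Lc k) : P.map B.noise = noiseLaw Lo Lc := by
  have hindep : iIndepFun (fun t ω => B.noise ω t) P := by
    convert B.indep.precomp (Idx.shift_injective 1 0) using 1
    ext t ω
    cases t <;> rfl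
  refine (hindep.map_fun_eq_infinitePi_map
    fun t => measurable_pi_iff.1 B.measurable_noise t).trans ?_
  congr 1 with t : 1
  cases t
  exacts [B.distX _ _, B.distY _ _ _]

lemma offspring_noise (B : DBPC P Lo Lc k) (ω : Ω) (g c : ℕ) :
    offspring (B.noise ω) g 0 c = (∑ i ∈ Icc 1 c, B.X (g + 1) i ω) +
      ∑ i ∈ Icc 1 c, ∑ j ∈ Ico 1 i, B.Y (g + 1) i j ω := by
  have hIcc : Icc 1 c = Ioc 0 (0 + c) := by ext; simp; omega
  have hIco (i : ℕ) : Ico 1 i = Ioo 0 i := by ext; simp; omega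
  simp only [offspring, sum_add_distrib, hIcc, hIco]
  rfl

lemma ae_Z_eq_population (B : DBPC P Lo Lc k) :
    ∀ᵐ ω ∂P, ∀ g, B.Z g ω = population k (B.noise ω) g := by
  filter_upwards [B.init, ae_all_iff.2 B.step] with ω h0 hstep g
  induction g with
  | zero => exact h0
  | succ g ih => rw [hstep, population, ← ih, offspring_noise]

lemma measure_extinction (B : DBPC P Lo Lc k) :
    P {ω | ∃ g, 1 ≤ g ∧ B.Z g ω = 0} =
      noiseLaw Lo Lc {ξ | ∃ g, 1 ≤ g ∧ population k ξ g = 0} := by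
  have hmeas : MeasurableSet {ξ | ∃ g, 1 ≤ g ∧ population k ξ g = 0} :=
    measurableSet_setOfPred.2 <| Measurable.exists fun g => measurable_const.and <|
      measurableSet_setOfPred.1 (measurable_population k g (measurableSet_singleton 0))
  rw [← B.map_noise, Measure.map_apply B.measurable_noise hmeas]
  refine measure_congr (Filter.Eventually.set_eq ?_)
  filter_upwards [B.ae_Z_eq_population] with ω h
  simp only [Set.mem_ofPred_eq, Set.mem_preimage, h]

end DBPC

theorem dbpc_extinction_probability_power_bound_general
    {Ω₁ : Type*} [MeasurableSpace Ω₁] (P₁ : Measure Ω₁)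
    {Ωₘ : Type*} [MeasurableSpace Ωₘ] (Pₘ : Measure Ωₘ)
    (Lo Lc : PMF ℕ) (m : ℕ)
    (B₁ : DBPC P₁ Lo Lc 1) (Bₘ : DBPC Pₘ Lo Lc m) :
    (Pₘ {ω | ∃ g : ℕ, 1 ≤ g ∧ Bₘ.Z g ω = 0}).toReal ≤
      ((P₁ {ω | ∃ g : ℕ, 1 ≤ g ∧ B₁.Z g ω = 0}).toReal) ^ m := by
  rw [B₁.measure_extinction, Bₘ.measure_extinction, ← ENNReal.toReal_pow]
  exact ENNReal.toReal_mono (ENNReal.pow_ne_top (measure_ne_top _ _))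
    (DBPC.noiseLaw_extinction_le_pow Lo Lc m)

/-- Superbranching property: for a DBPC with the same offspring and
cooperation distributions, the extinction probability started from `m ≥ 1`
individuals is at most the `m`-th power of the extinction probability `q`
started from one individual. -/
theorem dbpc_extinction_probability_power_bound
    {Ω₁ : Type*} [MeasurableSpace Ω₁] (P₁ : Measure Ω₁) [IsProbabilityMeasure P₁]
    {Ωₘ : Type*} [MeasurableSpace Ωₘ] (Pₘ : Measure Ωₘ) [IsProbabilityMeasure Pₘ]
    (Lo Lc : PMF ℕ) (m : ℕ) (hm : 1 ≤ m)
    (B₁ : DBPC P₁ Lo Lc 1) (Bₘ : DBPC Pₘ Lo Lc m) :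
    (Pₘ {ω | ∃ g : ℕ, 1 ≤ g ∧ Bₘ.Z g ω = 0}).toReal ≤
      ((P₁ {ω | ∃ g : ℕ, 1 ≤ g ∧ B₁.Z g ω = 0}).toReal) ^ m :=
  dbpc_extinction_probability_power_bound_general P₁ Pₘ Lo Lc m B₁ Bₘ
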